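/- arXiv:1911.08800 — 4 statements merged into one kernel-verified Lean document; each statement's English description precedes it below -/
import Mathlib

section
/- Let A ∈ ℝ^{n×n} be a positive semidefinite matrix, u ∈ ℝ^n a vector with u orthogonal to the kernel of A, and k ∈ ℝ. Then (A + k u u^T)^+ = A^+ − (k A^+ u u^T A^+)/(1 + k u^T A^+ u), provided 1 + k u^T A^+ u ≠ 0. -/
open Matrix

/-- `B` is the Moore–Penrose pseudoinverse of `A`. -/
def IsMoorePenrose {n d : Type*} [Fintype n] [Fintype d]
    (A : Matrix n d ℝ) (B : Matrix d n ℝ) : Prop :=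
  A * B * A = A ∧ B * A * B = B ∧ (A * B)ᵀ = A * B ∧ (B * A)ᵀ = B * A

private lemma mul_vmv {n : ℕ} (M : Matrix (Fin n) (Fin n) ℝ) (a b : Fin n → ℝ) :
    M * vecMulVec a b = vecMulVec (M *ᵥ a) b := by
  ext i j; simp [mul_apply, vecMulVec_apply, mulVec, dotProduct, Finset.sum_mul, mul_assoc]

private lemma vmv_mul {n : ℕ} (M : Matrix (Fin n) (Fin n) ℝ) (a b : Fin n → ℝ) :
    vecMulVec a b * M = vecMulVec a (b ᵥ* M) := by
  ext i j; simp [mul_apply, vecMulVec_apply, vecMul, dotProduct, Finset.mul_sum, mul_assoc]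

private lemma vmv_vmv {n : ℕ} (a b c d : Fin n → ℝ) :
    vecMulVec a b * vecMulVec c d = (b ⬝ᵥ c) • vecMulVec a d := by
  ext i j; simp [mul_apply, vecMulVec_apply, dotProduct, Finset.sum_mul, Finset.mul_sum]
  exact Finset.sum_congr rfl fun x _ => by ring

/-- Sherman–Morrison formula for the Moore–Penrose pseudoinverse:
if `A` is PSD, `u ⟂ Ker A`, and `1 + k uᵀA⁺u ≠ 0`, then
`(A + k u uᵀ)⁺ = A⁺ − k A⁺ u uᵀ A⁺ / (1 + k uᵀ A⁺ u)`. -/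
theorem sherman_morrison_pseudoinverse {n : ℕ} (A : Matrix (Fin n) (Fin n) ℝ)
    (hA : A.PosSemidef) (u : Fin n → ℝ) (k : ℝ)
    (hker : ∀ v : Fin n → ℝ, A *ᵥ v = 0 → u ⬝ᵥ v = 0)
    (P : Matrix (Fin n) (Fin n) ℝ) (hP : IsMoorePenrose A P)
    (hden : 1 + k * (u ⬝ᵥ (P *ᵥ u)) ≠ 0) :
    IsMoorePenrose (A + k • vecMulVec u u)
      (P - (k / (1 + k * (u ⬝ᵥ (P *ᵥ u)))) • vecMulVec (P *ᵥ u) (u ᵥ* P)) := by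
  obtain ⟨h1, h2, h3, h4⟩ := hP
  have hAt : Aᵀ = A := hA.1
  set α := u ⬝ᵥ (P *ᵥ u) with hα
  set c := k / (1 + k * α) with hc
  set p := P *ᵥ u with hp
  set q := u ᵥ* P with hq
  -- A * (A * P) = A
  have hAPsym : A * P = Pᵀ * A := by
    conv_lhs => rw [← h3]
    rw [transpose_mul, hAt]
  have hAAP : A * (A * P) = A := by
    have hstep : A * (Pᵀ * A) = A := by
      have h := congrArg Matrix.transpose h1
      rw [transpose_mul, transpose_mul, hAt, ← mul_assoc] at h
      rw [← mul_assoc]; exact h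
    rw [hAPsym]; exact hstep
  -- (A*P) *ᵥ u = u
  have hAPu : (A * P) *ᵥ u = u := by
    set w := u - (A * P) *ᵥ u with hw
    have hAw : A *ᵥ w = 0 := by
      rw [hw, mulVec_sub, mulVec_mulVec, hAAP, sub_self]
    have huw : u ⬝ᵥ w = 0 := hker w hAw
    have hAPAP : (A * P) * (A * P) = A * P := by
      rw [← Matrix.mul_assoc, h1]
    have hAPw : (A * P) *ᵥ w = 0 := by
      rw [hw, mulVec_sub, mulVec_mulVec, hAPAP, sub_self]
    have hww : w ⬝ᵥ w = 0 := by
      have e1 : w ⬝ᵥ w = w ⬝ᵥ u - w ⬝ᵥ ((A * P) *ᵥ u) := by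
        rw [hw]; simp [dotProduct_sub]
      have e2 : w ⬝ᵥ ((A * P) *ᵥ u) = ((A * P) *ᵥ w) ⬝ᵥ u := by
        rw [dotProduct_mulVec, ← mulVec_transpose, h3]
      rw [e1, e2, hAPw, dotProduct_comm, huw, zero_dotProduct, sub_zero]
    have : w = 0 := dotProduct_self_eq_zero.mp hww
    have := sub_eq_zero.mp this
    exact this.symm
  -- (P*A) *ᵥ u = u
  have hPAu : (P * A) *ᵥ u = u := by
    set w := u - (P * A) *ᵥ u with hw
    have hAw : A *ᵥ w = 0 := by
      rw [hw, mulVec_sub, mulVec_mulVec, ← Matrix.mul_assoc, h1, sub_self]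
    have huw : u ⬝ᵥ w = 0 := hker w hAw
    have hPAPA : (P * A) * (P * A) = P * A := by
      rw [← Matrix.mul_assoc, h2]
    have hPAw : (P * A) *ᵥ w = 0 := by
      rw [hw, mulVec_sub, mulVec_mulVec, hPAPA, sub_self]
    have hww : w ⬝ᵥ w = 0 := by
      have e1 : w ⬝ᵥ w = w ⬝ᵥ u - w ⬝ᵥ ((P * A) *ᵥ u) := by
        rw [hw]; simp [dotProduct_sub]
      have e2 : w ⬝ᵥ ((P * A) *ᵥ u) = ((P * A) *ᵥ w) ⬝ᵥ u := by
        rw [dotProduct_mulVec, ← mulVec_transpose, h4]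
      rw [e1, e2, hPAw, dotProduct_comm, huw, zero_dotProduct, sub_zero]
    have : w = 0 := dotProduct_self_eq_zero.mp hww
    exact (sub_eq_zero.mp this).symm
  -- vector identities
  have hAp : A *ᵥ p = u := by rw [hp, mulVec_mulVec]; exact hAPu
  have hqA : q ᵥ* A = u := by
    rw [hq, vecMul_vecMul, ← h4, vecMul_transpose]
    exact hPAu
  have hup : u ⬝ᵥ p = α := rfl
  have hqu : q ⬝ᵥ u = α := by
    rw [hq, ← dotProduct_mulVec, hα, hp]
  set M := A + k • vecMulVec u u with hM
  set B := P - c • vecMulVec p q with hB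
  -- key: M * B = A * P
  have key1 : M * B = A * P := by
    rw [hM, hB, add_mul, mul_sub, mul_sub, smul_mul_assoc, smul_mul_assoc,
      mul_smul_comm, mul_smul_comm, mul_vmv, vmv_mul, vmv_vmv, hAp, hup]
    have : u ᵥ* P = q := rfl
    rw [this]
    have hscal : k - c - k * c * α = 0 := by
      rw [hc]; field_simp; ring
    have hfin : k • vecMulVec u q - c • vecMulVec u q - k • c • α • vecMulVec u q
        = (0 : ℝ) • vecMulVec u q := by
      rw [← hscal]; module
    rw [zero_smul] at hfin
    calc A * P - c • vecMulVec u q + (k • vecMulVec u q - k • c • α • vecMulVec u q)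
        = A * P + (k • vecMulVec u q - c • vecMulVec u q - k • c • α • vecMulVec u q) := by
          abel
      _ = A * P := by rw [hfin, add_zero]
  -- key: B * M = P * A
  have key2 : B * M = P * A := by
    rw [hM, hB, sub_mul, mul_add, mul_add, smul_mul_assoc, smul_mul_assoc,
      mul_smul_comm, mul_smul_comm, vmv_mul, mul_vmv, vmv_vmv, hqA, hqu]
    have hPu : P *ᵥ u = p := rfl
    rw [hPu]
    have hscal : k - c - k * c * α = 0 := by
      rw [hc]; field_simp; ring
    have hfin : k • vecMulVec p u - c • vecMulVec p u - c • k • α • vecMulVec p u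
        = (0 : ℝ) • vecMulVec p u := by
      rw [← hscal]; module
    rw [zero_smul] at hfin
    calc P * A + k • vecMulVec p u - (c • vecMulVec p u + c • k • α • vecMulVec p u)
        = P * A + (k • vecMulVec p u - c • vecMulVec p u - c • k • α • vecMulVec p u) := by
          abel
      _ = P * A := by rw [hfin, add_zero]
  refine ⟨?_, ?_, ?_, ?_⟩
  · -- M * B * M = M
    rw [key1, hM, mul_add, h1, mul_smul_comm, mul_vmv, hAPu]
  · -- B * M * B = B
    have hPAp : (P * A) *ᵥ p = p := by
      rw [hp, mulVec_mulVec, h2]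
    rw [key2, hB, mul_sub, mul_smul_comm, h2, mul_vmv, hPAp]
  · rw [key1]; exact h3
  · rw [key2]; exact h4
end

section
/- Let A, B ∈ ℝ^{n×d} be matrices, and let C be the matrix obtained by appending the row a_i^T to B. If a_i is orthogonal to Ker(B), then the relative leverage score τ_i^B(A) := a_i^T (C^T C)^+ a_i equals (a_i^T (B^T B)^+ a_i)/(a_i^T (B^T B)^+ a_i + 1); if a_i is not orthogonal to Ker(B), then τ_i^B(A) = 1. -/
/-!
Write `a = aᵢ`, `M = BᵀB` and `N = CᵀC = M + a aᵀ`. Whenever `N y = a`, the identity `N P N = N`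
for the symmetric `N` gives `aᵀ P a = yᵀ N P N y = yᵀ a`, so it suffices to solve `N y = a`.
If `a ⟂ ker B = ker M`, then `a` lies in the range of `M`, so `M Q a = a`; with `q = aᵀ Q a ≥ 0`
this gives `N (Q a) = (1 + q) a`, and `y = Q a / (1 + q)` yields `q / (q + 1)`.
Otherwise some `v ∈ ker B` has `aᵀ v ≠ 0`; then `N v = (aᵀ v) a`, and `y = v / aᵀ v` yields `1`.
-/

open Matrix

namespace Matrix

variable {m n R : Type*}

lemma transpose_mul_self_of_snoc [CommSemiring R] {k : ℕ} (B : Matrix (Fin k) n R) (a : n → R) :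
    (of (Fin.snoc B a))ᵀ * of (Fin.snoc B a) = Bᵀ * B + vecMulVec a a := by
  ext j l
  simp [mul_apply, Fin.sum_univ_castSucc, vecMulVec_apply, Fin.snoc]

variable [Fintype m] [Fintype n]

lemma add_vecMulVec_self_mulVec [CommSemiring R] (M : Matrix n n R) (a v : n → R) :
    (M + vecMulVec a a) *ᵥ v = M *ᵥ v + (a ⬝ᵥ v) • a := by
  rw [add_mulVec, vecMulVec_mulVec, op_smul_eq_smul]

lemma dotProduct_transpose_mul_self_mulVec [CommSemiring R] (B : Matrix m n R) (v : n → R) :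
    v ⬝ᵥ ((Bᵀ * B) *ᵥ v) = (B *ᵥ v) ⬝ᵥ (B *ᵥ v) := by
  rw [← mulVec_mulVec, dotProduct_mulVec, vecMul_transpose]

lemma dotProduct_mulVec_eq_of_mulVec_eq [CommSemiring R] {X P : Matrix n n R} (hX : Xᵀ = X)
    (hXPX : X * P * X = X) {a y : n → R} (hy : X *ᵥ y = a) : a ⬝ᵥ (P *ᵥ a) = y ⬝ᵥ a := by
  calc a ⬝ᵥ (P *ᵥ a) = y ⬝ᵥ ((X * P * X) *ᵥ y) := by
        rw [← hy, ← mulVec_mulVec, ← mulVec_mulVec, dotProduct_mulVec y X, ← mulVec_transpose, hX]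
    _ = y ⬝ᵥ a := by rw [hXPX, hy]

/- `X * P` is the orthogonal projection onto the range of `X`, which is the orthogonal complement
of `ker Xᵀ`. -/
lemma mulVec_mulVec_eq_self_of_orthogonal_ker [CommRing R] [LinearOrder R] [IsStrictOrderedRing R]
    {X : Matrix m n R} {P : Matrix n m R} (hXPX : X * P * X = X) (hXP : (X * P)ᵀ = X * P)
    {a : m → R} (ha : ∀ v, Xᵀ *ᵥ v = 0 → a ⬝ᵥ v = 0) : X *ᵥ (P *ᵥ a) = a := by
  set w := a - X *ᵥ (P *ᵥ a)
  have hXw : Xᵀ *ᵥ w = 0 := by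
    rw [mulVec_transpose, sub_vecMul, mulVec_mulVec, ← vecMul_transpose, hXP, vecMul_vecMul,
      hXPX, sub_self]
  have hww : w ⬝ᵥ w = 0 := by
    calc w ⬝ᵥ w = a ⬝ᵥ w - (P *ᵥ a) ⬝ᵥ (Xᵀ *ᵥ w) := by
          rw [sub_dotProduct, dotProduct_mulVec, ← mulVec_transpose, transpose_transpose]
      _ = 0 := by rw [ha w hXw, hXw, dotProduct_zero, sub_zero]
  exact (sub_eq_zero.mp (dotProduct_self_eq_zero.mp hww)).symm

end Matrix

/-- The relative leverage score `τ_i^B(A) = aᵢᵀ (CᵀC)⁺ aᵢ`, where `C` is `B` with the row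
`aᵢᵀ` appended, equals `aᵢᵀ(BᵀB)⁺aᵢ / (aᵢᵀ(BᵀB)⁺aᵢ + 1)` if `aᵢ ⟂ Ker B`, and `1` otherwise. -/
theorem relative_leverage_score_formula {n m d : ℕ}
    (A : Matrix (Fin n) (Fin d) ℝ) (B : Matrix (Fin m) (Fin d) ℝ) (i : Fin n)
    (C : Matrix (Fin (m + 1)) (Fin d) ℝ) (hC : C = Matrix.of (Fin.snoc B (A i)))
    (P : Matrix (Fin d) (Fin d) ℝ) (hP : IsMoorePenrose (Cᵀ * C) P)
    (Q : Matrix (Fin d) (Fin d) ℝ) (hQ : IsMoorePenrose (Bᵀ * B) Q) :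
    ((∀ v : Fin d → ℝ, B *ᵥ v = 0 → A i ⬝ᵥ v = 0) →
      A i ⬝ᵥ (P *ᵥ A i) = (A i ⬝ᵥ (Q *ᵥ A i)) / (A i ⬝ᵥ (Q *ᵥ A i) + 1)) ∧
    ((¬ ∀ v : Fin d → ℝ, B *ᵥ v = 0 → A i ⬝ᵥ v = 0) →
      A i ⬝ᵥ (P *ᵥ A i) = 1) := by
  set a := A i
  have hM : (Bᵀ * B)ᵀ = Bᵀ * B := by rw [transpose_mul, transpose_transpose]
  rw [hC, transpose_mul_self_of_snoc] at hP
  have hN : (Bᵀ * B + vecMulVec a a)ᵀ = Bᵀ * B + vecMulVec a a := by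
    rw [transpose_add, hM, transpose_vecMulVec]
  have leverage (y : Fin d → ℝ) (hy : (Bᵀ * B + vecMulVec a a) *ᵥ y = a) :
      a ⬝ᵥ (P *ᵥ a) = y ⬝ᵥ a :=
    dotProduct_mulVec_eq_of_mulVec_eq hN hP.1 hy
  constructor
  · intro horth
    set q := a ⬝ᵥ (Q *ᵥ a)
    have hMQa : (Bᵀ * B) *ᵥ (Q *ᵥ a) = a := by
      refine mulVec_mulVec_eq_self_of_orthogonal_ker hQ.1 hQ.2.2.1 fun v hv => horth v ?_
      rw [hM] at hv
      exact (SetLike.ext_iff.mp (ker_mulVecLin_transpose_mul_self B) v).mp hv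
    have hq : q + 1 ≠ 0 := by
      suffices 0 ≤ q by positivity
      have hq_sq : q = (B *ᵥ (Q *ᵥ a)) ⬝ᵥ (B *ᵥ (Q *ᵥ a)) := by
        rw [← dotProduct_transpose_mul_self_mulVec, hMQa, dotProduct_comm]
      rw [hq_sq]
      exact Finset.sum_nonneg fun _ _ => mul_self_nonneg _
    rw [leverage ((q + 1)⁻¹ • (Q *ᵥ a))]
    · rw [smul_dotProduct, dotProduct_comm _ a, smul_eq_mul, inv_mul_eq_div]
    · have hNQa : a + q • a = (q + 1) • a := by module
      rw [mulVec_smul, add_vecMulVec_self_mulVec, hMQa, hNQa, smul_smul, inv_mul_cancel₀ hq,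
        one_smul]
  · intro hnonorth
    push Not at hnonorth
    obtain ⟨v, hBv, hav⟩ := hnonorth
    rw [leverage ((a ⬝ᵥ v)⁻¹ • v)]
    · rw [smul_dotProduct, dotProduct_comm v a, smul_eq_mul, inv_mul_cancel₀ hav]
    · rw [mulVec_smul, add_vecMulVec_self_mulVec, ← mulVec_mulVec, hBv, mulVec_zero, zero_add,
        smul_smul, inv_mul_cancel₀ hav, one_smul]
end

section
/- Let A ∈ ℝ^{n×n} be a positive semidefinite matrix of rank r, and u ∈ ℝ^n a vector not orthogonal to Ker(A). Then Det(A + u u^T) ≥ λ_min(A + u u^T) · Det(A), where λ_min denotes the smallest nonzero eigenvalue and Det the pseudo-determinant. -/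
open Matrix

/-!
Let `P` be the orthogonal projection onto `ker A`, `u₀ = P u` and `t = uᵀ P u = ‖u₀‖²`; `t > 0`
because `u` is not orthogonal to `ker A`.

For Hermitian `M`, `det (M + Q)` is the pseudo-determinant of `M` for every idempotent `Q` with
`M Q = Q M = 0` and `det (M + Q) ≠ 0`: indeed `M + Q = (M + K) (1 - K + Q)`, where `K` is the
projection onto `ker M`, and `1 - K + Q` is idempotent. Taking `Q = P - t⁻¹ u₀ u₀ᵀ` for
`M = A + u uᵀ`, a rank-two matrix determinant lemma gives `Det (A + u uᵀ) = t · Det A`.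

Finally `(A + u uᵀ) u₀ = t u`, so `u₀`, which is orthogonal to `ker (A + u uᵀ)`, has Rayleigh
quotient `t`; hence the smallest nonzero eigenvalue of `A + u uᵀ` is at most `t`.
-/

namespace Matrix

lemma IsSymm.vecMul_eq_mulVec {α n : Type*} [CommSemiring α] [Fintype n] {M : Matrix n n α}
    (hM : M.IsSymm) (x : n → α) : x ᵥ* M = M *ᵥ x := by
  rw [← mulVec_transpose, hM.eq]

theorem det_add_vecMulVec_add_vecMulVec {α n : Type*} [CommRing α] [Fintype n] [DecidableEq n]
    {G : Matrix n n α} (hG : IsUnit G.det) (a b c d : n → α) :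
    det (G + vecMulVec a b + vecMulVec c d) =
      det G * ((1 + b ⬝ᵥ G⁻¹ *ᵥ a) * (1 + d ⬝ᵥ G⁻¹ *ᵥ c) - (b ⬝ᵥ G⁻¹ *ᵥ c) * (d ⬝ᵥ G⁻¹ *ᵥ a)) := by
  have hUV : vecMulVec a b + vecMulVec c d = (of ![a, c])ᵀ * of ![b, d] := by
    ext i j
    simp [mul_apply, Fin.sum_univ_two, vecMulVec_apply]
  have hentry : ∀ k l,
      (of ![b, d] * G⁻¹ * (of ![a, c])ᵀ) k l = ![b, d] k ⬝ᵥ G⁻¹ *ᵥ ![a, c] l := by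
    intro k l
    rw [dotProduct_mulVec]
    simp only [mul_apply, vecMul, dotProduct, transpose_apply, of_apply]
  rw [add_assoc, hUV, det_add_mul _ _ hG, det_fin_two]
  simp only [add_apply, hentry]
  simp

section KerProj

variable {𝕜 n : Type*} [RCLike 𝕜] [Fintype n] [DecidableEq n] {A : Matrix n n 𝕜}

lemma continuousOn_spectrum_real (A : Matrix n n 𝕜) (f : ℝ → ℝ) :
    ContinuousOn f (spectrum ℝ A) :=
  finite_real_spectrum.continuousOn f

lemma IsHermitian.det_cfc (hA : A.IsHermitian) (f : ℝ → ℝ) :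
    det (cfc f A) = ∏ i, (f (hA.eigenvalues i) : 𝕜) := by
  rw [hA.cfc_eq]
  simp [IsHermitian.cfc, -Unitary.conjStarAlgAut_apply]

/-- The orthogonal projection onto `ker A` when `A` is Hermitian (`cfc` gives `0` otherwise). -/
noncomputable def kerProj (A : Matrix n n 𝕜) : Matrix n n 𝕜 :=
  cfc (fun x : ℝ => if x = 0 then 1 else 0) A

lemma isHermitian_kerProj (A : Matrix n n 𝕜) : (kerProj A).IsHermitian :=
  cfc_predicate _ A

namespace IsHermitian

lemma isIdempotentElem_kerProj (hA : A.IsHermitian) : IsIdempotentElem (kerProj A) := by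
  have : IsSelfAdjoint A := hA
  rw [IsIdempotentElem, kerProj, ← cfc_mul _ _ A (continuousOn_spectrum_real A _)
    (continuousOn_spectrum_real A _)]
  congr 1
  ext x
  split_ifs <;> simp

lemma mul_kerProj (hA : A.IsHermitian) : A * kerProj A = 0 := by
  have : IsSelfAdjoint A := hA
  have h := cfc_mul (fun x : ℝ => x) (fun x : ℝ => if x = 0 then 1 else 0) A
    (by fun_prop) (continuousOn_spectrum_real A _)
  rw [cfc_id' ℝ A] at h
  rw [kerProj, ← h]
  convert cfc_zero ℝ A using 2
  ext x
  split_ifs with hx <;> simp [hx]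

lemma kerProj_mul (hA : A.IsHermitian) : kerProj A * A = 0 := by
  have : IsSelfAdjoint A := hA
  have h := cfc_mul (fun x : ℝ => if x = 0 then 1 else 0) (fun x : ℝ => x) A
    (continuousOn_spectrum_real A _) (by fun_prop)
  rw [cfc_id' ℝ A] at h
  rw [kerProj, ← h]
  convert cfc_zero ℝ A using 2
  ext x
  split_ifs with hx <;> simp [hx]

lemma kerProj_eq_one_sub_cfc_inv_mul (hA : A.IsHermitian) :
    kerProj A = 1 - cfc (·⁻¹ : ℝ → ℝ) A * A := by
  have : IsSelfAdjoint A := hA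
  have h := cfc_mul (·⁻¹ : ℝ → ℝ) (fun x : ℝ => x) A (continuousOn_spectrum_real A _) (by fun_prop)
  rw [cfc_id' ℝ A] at h
  rw [← h, ← cfc_const_one ℝ A, ← cfc_sub _ _ A (by fun_prop) (continuousOn_spectrum_real A _),
    kerProj]
  congr 1
  ext x
  by_cases hx : x = 0 <;> simp [hx]

lemma kerProj_eq_one_sub_mul_cfc_inv (hA : A.IsHermitian) :
    kerProj A = 1 - A * cfc (·⁻¹ : ℝ → ℝ) A := by
  have : IsSelfAdjoint A := hA
  have h := cfc_mul (fun x : ℝ => x) (·⁻¹ : ℝ → ℝ) A (by fun_prop) (continuousOn_spectrum_real A _)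
  rw [cfc_id' ℝ A] at h
  rw [← h, ← cfc_const_one ℝ A, ← cfc_sub _ _ A (by fun_prop) (continuousOn_spectrum_real A _),
    kerProj]
  congr 1
  ext x
  by_cases hx : x = 0 <;> simp [hx]

lemma kerProj_mul_of_mul_eq_zero {m : Type*} (hA : A.IsHermitian) {X : Matrix n m 𝕜}
    (hX : A * X = 0) : kerProj A * X = X := by
  rw [hA.kerProj_eq_one_sub_cfc_inv_mul, Matrix.sub_mul, Matrix.mul_assoc, hX]
  simp

lemma mul_kerProj_of_mul_eq_zero {m : Type*} (hA : A.IsHermitian) {X : Matrix m n 𝕜}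
    (hX : X * A = 0) : X * kerProj A = X := by
  rw [hA.kerProj_eq_one_sub_mul_cfc_inv, Matrix.mul_sub, ← Matrix.mul_assoc, hX]
  simp

lemma kerProj_mulVec_of_mulVec_eq_zero (hA : A.IsHermitian) {v : n → 𝕜}
    (hv : A *ᵥ v = 0) : kerProj A *ᵥ v = v := by
  rw [hA.kerProj_eq_one_sub_cfc_inv_mul, sub_mulVec, ← mulVec_mulVec, hv]
  simp

lemma det_add_kerProj (hA : A.IsHermitian) :
    det (A + kerProj A) =
      ∏ i ∈ Finset.univ.filter (hA.eigenvalues · ≠ 0), (hA.eigenvalues i : 𝕜) := by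
  have : IsSelfAdjoint A := hA
  have h := cfc_add (a := A) (fun x : ℝ => x) (fun x : ℝ => if x = 0 then 1 else 0)
    (by fun_prop) (continuousOn_spectrum_real A _)
  rw [cfc_id' ℝ A] at h
  rw [kerProj, ← h, hA.det_cfc, Finset.prod_filter]
  refine Finset.prod_congr rfl fun i _ => ?_
  split_ifs <;> simp_all

theorem det_add_eq_prod_nonzero_eigenvalues (hA : A.IsHermitian) {P : Matrix n n 𝕜}
    (hP : IsIdempotentElem P) (hAP : A * P = 0) (hPA : P * A = 0) (hdet : det (A + P) ≠ 0) :
    det (A + P) = ∏ i ∈ Finset.univ.filter (hA.eigenvalues · ≠ 0), (hA.eigenvalues i : 𝕜) := by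
  set K := kerProj A
  have hAK : A * K = 0 := hA.mul_kerProj
  have hKK : K * K = K := hA.isIdempotentElem_kerProj.eq
  have hKP : K * P = P := hA.kerProj_mul_of_mul_eq_zero hAP
  have hPK : P * K = P := hA.mul_kerProj_of_mul_eq_zero hPA
  have hfactor : A + P = (A + K) * (1 - K + P) := by
    simp only [Matrix.add_mul, Matrix.mul_add, Matrix.mul_sub, Matrix.mul_one, hAK, hKK, hAP, hKP]
    abel
  have hidem : IsIdempotentElem (1 - K + P) := by
    simp only [IsIdempotentElem, Matrix.add_mul, Matrix.mul_add, Matrix.sub_mul, Matrix.mul_sub,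
      Matrix.mul_one, Matrix.one_mul, hKK, hKP, hPK, hP.eq]
    abel
  have hdet1 : det (1 - K + P) = 1 := by
    refine (IsIdempotentElem.iff_eq_zero_or_one.mp (hidem.map detMonoidHom)).resolve_left
      fun h0 => hdet ?_
    rw [hfactor, det_mul]
    exact mul_eq_zero_of_right _ h0
  rw [hfactor, det_mul, hdet1, mul_one, hA.det_add_kerProj]

end IsHermitian

end KerProj

open scoped MatrixOrder in
theorem IsHermitian.sInf_nonzero_eigenvalues_mul_dotProduct_le {n : Type*} [Fintype n]
    [DecidableEq n] {B : Matrix n n ℝ} (hB : B.IsHermitian) {x : n → ℝ}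
    (hx : ∀ w, B *ᵥ w = 0 → x ⬝ᵥ w = 0) :
    sInf {μ | (∃ i, hB.eigenvalues i = μ) ∧ μ ≠ 0} * (x ⬝ᵥ x) ≤ x ⬝ᵥ B *ᵥ x := by
  set m := sInf {μ | (∃ i, hB.eigenvalues i = μ) ∧ μ ≠ 0}
  have : IsSelfAdjoint B := hB
  have hm : ∀ μ ∈ spectrum ℝ B, μ ≠ 0 → m ≤ μ := by
    intro μ hμ hμ0
    rw [hB.spectrum_real_eq_range_eigenvalues] at hμ
    exact csInf_le ((Set.finite_range _).subset fun _ h => h.1).bddBelow ⟨hμ, hμ0⟩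
  have hcfc : B - m • (1 - kerProj B) =
      cfc (fun μ : ℝ => μ - m * (1 - if μ = 0 then 1 else 0)) B := by
    rw [cfc_sub _ _ B (by fun_prop) (continuousOn_spectrum_real B _),
      cfc_const_mul _ _ B (continuousOn_spectrum_real B _),
      cfc_sub _ _ B (by fun_prop) (continuousOn_spectrum_real B _), cfc_id' ℝ B,
      cfc_const_one ℝ B, kerProj]
  have hpsd : (B - m • (1 - kerProj B)).PosSemidef := by
    rw [← nonneg_iff_posSemidef, hcfc]
    refine cfc_nonneg fun μ hμ => ?_
    by_cases h : μ = 0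
    · simp [h]
    · simpa [h] using hm μ hμ h
  have hKx : x ⬝ᵥ kerProj B *ᵥ x = 0 :=
    hx _ (by rw [mulVec_mulVec, hB.mul_kerProj, zero_mulVec])
  have := hpsd.dotProduct_mulVec_nonneg x
  simp only [star_trivial, sub_mulVec, smul_mulVec, dotProduct_sub, dotProduct_smul, one_mulVec,
    hKx, smul_eq_mul] at this
  linarith

lemma PosSemidef.mulVec_eq_zero_and_dotProduct_eq_zero_of_add_vecMulVec {n : Type*} [Fintype n]
    {A : Matrix n n ℝ} (hA : A.PosSemidef) {u w : n → ℝ} (hw : (A + vecMulVec u u) *ᵥ w = 0) :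
    A *ᵥ w = 0 ∧ u ⬝ᵥ w = 0 := by
  have hsum : w ⬝ᵥ A *ᵥ w + (u ⬝ᵥ w) * (u ⬝ᵥ w) = 0 := by
    simpa [add_mulVec, vecMulVec_mulVec, dotProduct_comm w u, mul_comm] using
      congrArg (w ⬝ᵥ ·) hw
  have hAw : 0 ≤ w ⬝ᵥ A *ᵥ w := by simpa using hA.dotProduct_mulVec_nonneg w
  have huw : u ⬝ᵥ w = 0 := by nlinarith [mul_self_nonneg (u ⬝ᵥ w)]
  refine ⟨(hA.dotProduct_mulVec_zero_iff w).mp ?_, huw⟩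
  simpa [huw] using hsum

section RankOneUpdate

variable {n : Type*} [Fintype n] [DecidableEq n] {A : Matrix n n ℝ}

lemma isSymm_kerProj (A : Matrix n n ℝ) : (kerProj A).IsSymm := by
  simpa using isHermitian_kerProj A

lemma IsHermitian.dotProduct_kerProj_mulVec_self (hA : A.IsHermitian) (u : n → ℝ) :
    u ⬝ᵥ kerProj A *ᵥ u = kerProj A *ᵥ u ⬝ᵥ kerProj A *ᵥ u :=
  calc u ⬝ᵥ kerProj A *ᵥ u = u ⬝ᵥ (kerProj A * kerProj A) *ᵥ u := by
        rw [hA.isIdempotentElem_kerProj.eq]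
    _ = kerProj A *ᵥ u ⬝ᵥ kerProj A *ᵥ u := by
        rw [← mulVec_mulVec, dotProduct_mulVec, (isSymm_kerProj A).vecMul_eq_mulVec]

lemma IsHermitian.dotProduct_kerProj_mulVec_pos (hA : A.IsHermitian) {u : n → ℝ}
    (hu : ∃ v, A *ᵥ v = 0 ∧ u ⬝ᵥ v ≠ 0) : 0 < u ⬝ᵥ kerProj A *ᵥ u := by
  obtain ⟨v, hAv, huv⟩ := hu
  rw [hA.dotProduct_kerProj_mulVec_self]
  refine lt_of_le_of_ne (by simpa using dotProduct_star_self_nonneg (kerProj A *ᵥ u))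
    fun h => huv ?_
  rw [← hA.kerProj_mulVec_of_mulVec_eq_zero hAv, dotProduct_mulVec,
    (isSymm_kerProj A).vecMul_eq_mulVec, dotProduct_self_eq_zero.mp h.symm, zero_dotProduct]

/-- With `u₀ = kerProj A *ᵥ u` and `t = u ⬝ᵥ u₀`, the projection `kerProj A - t⁻¹ u₀ u₀ᵀ` onto
`ker A ∩ u⊥`, which is `ker (A + u uᵀ)` when `A` is positive semidefinite. -/
noncomputable def kerProjUpdate (A : Matrix n n ℝ) (u : n → ℝ) : Matrix n n ℝ :=
  kerProj A - (u ⬝ᵥ kerProj A *ᵥ u)⁻¹ • vecMulVec (kerProj A *ᵥ u) (kerProj A *ᵥ u)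

namespace IsHermitian

variable {u : n → ℝ}

lemma add_vecMulVec_mul_kerProjUpdate (hA : A.IsHermitian) (ht : u ⬝ᵥ kerProj A *ᵥ u ≠ 0) :
    (A + vecMulVec u u) * kerProjUpdate A u = 0 := by
  have hAu₀ : A *ᵥ (kerProj A *ᵥ u) = 0 := by rw [mulVec_mulVec, hA.mul_kerProj, zero_mulVec]
  rw [kerProjUpdate, Matrix.add_mul, Matrix.mul_sub, Matrix.mul_sub, Matrix.mul_smul,
    Matrix.mul_smul, hA.mul_kerProj, mul_vecMulVec, hAu₀, vecMulVec_mul,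
    (isSymm_kerProj A).vecMul_eq_mulVec, vecMulVec_mul_vecMulVec, vecMulVec_smul, smul_smul,
    inv_mul_cancel₀ ht]
  simp

lemma kerProjUpdate_mul_add_vecMulVec (hA : A.IsHermitian) (ht : u ⬝ᵥ kerProj A *ᵥ u ≠ 0) :
    kerProjUpdate A u * (A + vecMulVec u u) = 0 := by
  have hAs : A.IsSymm := by simpa using hA
  have hAu₀ : A *ᵥ (kerProj A *ᵥ u) = 0 := by rw [mulVec_mulVec, hA.mul_kerProj, zero_mulVec]
  rw [kerProjUpdate, Matrix.mul_add, Matrix.sub_mul, Matrix.sub_mul, Matrix.smul_mul,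
    Matrix.smul_mul, hA.kerProj_mul, vecMulVec_mul, hAs.vecMul_eq_mulVec, hAu₀, mul_vecMulVec,
    vecMulVec_mul_vecMulVec, dotProduct_comm (kerProj A *ᵥ u), vecMulVec_smul, smul_smul,
    inv_mul_cancel₀ ht]
  simp

lemma isIdempotentElem_kerProjUpdate (hA : A.IsHermitian) (ht : u ⬝ᵥ kerProj A *ᵥ u ≠ 0) :
    IsIdempotentElem (kerProjUpdate A u) := by
  have hK := hA.isIdempotentElem_kerProj.eq
  have hKu₀ : kerProj A *ᵥ (kerProj A *ᵥ u) = kerProj A *ᵥ u := by rw [mulVec_mulVec, hK]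
  rw [IsIdempotentElem, kerProjUpdate, Matrix.sub_mul, Matrix.mul_sub, Matrix.mul_sub, hK,
    Matrix.smul_mul, Matrix.mul_smul, Matrix.mul_smul, Matrix.smul_mul, mul_vecMulVec, hKu₀,
    vecMulVec_mul, (isSymm_kerProj A).vecMul_eq_mulVec, hKu₀, vecMulVec_mul_vecMulVec,
    ← hA.dotProduct_kerProj_mulVec_self, vecMulVec_smul, smul_smul, smul_smul, mul_assoc,
    inv_mul_cancel₀ ht, mul_one]
  abel

lemma det_add_vecMulVec_add_kerProjUpdate (hA : A.IsHermitian) (ht : u ⬝ᵥ kerProj A *ᵥ u ≠ 0) :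
    det (A + vecMulVec u u + kerProjUpdate A u) =
      (u ⬝ᵥ kerProj A *ᵥ u) * det (A + kerProj A) := by
  have hu₀u₀ := (hA.dotProduct_kerProj_mulVec_self u).symm
  rw [kerProjUpdate]
  set u₀ := kerProj A *ᵥ u
  set t := u ⬝ᵥ u₀
  set G := A + kerProj A
  have hG : IsUnit G.det := by
    rw [hA.det_add_kerProj]
    exact (Finset.prod_ne_zero_iff.mpr fun i hi => by
      simpa using (Finset.mem_filter.mp hi).2).isUnit
  have hGs : G.IsSymm := by simpa using hA.add (isHermitian_kerProj A)
  have hGu₀ : G *ᵥ u₀ = u₀ := by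
    rw [add_mulVec, mulVec_mulVec, mulVec_mulVec, hA.mul_kerProj,
      hA.isIdempotentElem_kerProj.eq, zero_mulVec, zero_add]
  have hGinvu₀ : G⁻¹ *ᵥ u₀ = u₀ := by
    conv_lhs => rw [← hGu₀, mulVec_mulVec, nonsing_inv_mul G hG, one_mulVec]
  have hu₀Ginvu : u₀ ⬝ᵥ G⁻¹ *ᵥ u = t := by
    rw [dotProduct_mulVec, hGs.inv.vecMul_eq_mulVec, hGinvu₀, dotProduct_comm]
  have hsplit : A + vecMulVec u u + (kerProj A - t⁻¹ • vecMulVec u₀ u₀) =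
      G + vecMulVec u u + vecMulVec u₀ (-t⁻¹ • u₀) := by
    rw [vecMulVec_smul, neg_smul, ← sub_eq_add_neg]
    simp only [G]
    abel
  rw [hsplit, det_add_vecMulVec_add_vecMulVec hG, hGinvu₀, neg_smul, neg_dotProduct,
    neg_dotProduct, smul_dotProduct, smul_dotProduct, hu₀Ginvu, hu₀u₀, smul_eq_mul,
    inv_mul_cancel₀ ht]
  ring

theorem prod_nonzero_eigenvalues_add_vecMulVec (hA : A.IsHermitian)
    (hB : (A + vecMulVec u u).IsHermitian) (ht : u ⬝ᵥ kerProj A *ᵥ u ≠ 0) :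
    ∏ i ∈ Finset.univ.filter (hB.eigenvalues · ≠ 0), hB.eigenvalues i =
      (u ⬝ᵥ kerProj A *ᵥ u) * ∏ i ∈ Finset.univ.filter (hA.eigenvalues · ≠ 0), hA.eigenvalues i := by
  have hdet := hA.det_add_vecMulVec_add_kerProjUpdate ht
  rw [hA.det_add_kerProj] at hdet
  have hne : det (A + vecMulVec u u + kerProjUpdate A u) ≠ 0 := by
    rw [hdet]
    exact mul_ne_zero ht (Finset.prod_ne_zero_iff.mpr fun i hi => by
      simpa using (Finset.mem_filter.mp hi).2)
  have hB' := hB.det_add_eq_prod_nonzero_eigenvalues (hA.isIdempotentElem_kerProjUpdate ht)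
    (hA.add_vecMulVec_mul_kerProjUpdate ht) (hA.kerProjUpdate_mul_add_vecMulVec ht) hne
  simpa [hdet] using hB'.symm

end IsHermitian

theorem PosSemidef.sInf_nonzero_eigenvalues_add_vecMulVec_le (hA : A.PosSemidef) {u : n → ℝ}
    (hB : (A + vecMulVec u u).IsHermitian) (ht : 0 < u ⬝ᵥ kerProj A *ᵥ u) :
    sInf {μ | (∃ i, hB.eigenvalues i = μ) ∧ μ ≠ 0} ≤ u ⬝ᵥ kerProj A *ᵥ u := by
  have hu₀u₀ := (hA.1.dotProduct_kerProj_mulVec_self u).symm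
  set u₀ := kerProj A *ᵥ u
  set t := u ⬝ᵥ u₀
  have hBu₀ : (A + vecMulVec u u) *ᵥ u₀ = t • u := by
    rw [add_mulVec, mulVec_mulVec, hA.1.mul_kerProj, zero_mulVec, zero_add, vecMulVec_mulVec,
      op_smul_eq_smul]
  have horth : ∀ w, (A + vecMulVec u u) *ᵥ w = 0 → u₀ ⬝ᵥ w = 0 := by
    intro w hw
    obtain ⟨hAw, huw⟩ := hA.mulVec_eq_zero_and_dotProduct_eq_zero_of_add_vecMulVec hw
    rwa [← hA.1.kerProj_mulVec_of_mulVec_eq_zero hAw, dotProduct_mulVec,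
      (isSymm_kerProj A).vecMul_eq_mulVec] at huw
  have h := hB.sInf_nonzero_eigenvalues_mul_dotProduct_le horth
  rw [hBu₀, hu₀u₀, dotProduct_smul, dotProduct_comm, smul_eq_mul] at h
  exact le_of_mul_le_mul_right h ht

end RankOneUpdate

end Matrix

theorem pseudo_det_lower_bound_general {n : ℕ} (A : Matrix (Fin n) (Fin n) ℝ)
    (hA : A.PosSemidef) (u : Fin n → ℝ)
    (hu : ∃ v : Fin n → ℝ, A *ᵥ v = 0 ∧ u ⬝ᵥ v ≠ 0)
    (hA' : (A + vecMulVec u u).IsHermitian) :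
    sInf {x : ℝ | (∃ i, hA'.eigenvalues i = x) ∧ x ≠ 0}
        * (∏ i ∈ Finset.univ.filter (fun i => hA.1.eigenvalues i ≠ 0), hA.1.eigenvalues i)
      ≤ ∏ i ∈ Finset.univ.filter (fun i => hA'.eigenvalues i ≠ 0), hA'.eigenvalues i := by
  have ht := hA.1.dotProduct_kerProj_mulVec_pos hu
  rw [hA.1.prod_nonzero_eigenvalues_add_vecMulVec hA' ht.ne']
  exact mul_le_mul_of_nonneg_right (hA.sInf_nonzero_eigenvalues_add_vecMulVec_le hA' ht)
    (Finset.prod_nonneg fun i _ => hA.eigenvalues_nonneg i)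

/-- For a PSD matrix `A` and a vector `u` not orthogonal to `Ker A`,
`Det(A + u uᵀ) ≥ λ_min(A + u uᵀ) · Det(A)`, where `λ_min` is the smallest nonzero
eigenvalue and `Det` the pseudo-determinant (product of nonzero eigenvalues). -/
theorem pseudo_det_lower_bound {n : ℕ} (A : Matrix (Fin n) (Fin n) ℝ)
    (hA : A.PosSemidef) (r : ℕ) (hr : A.rank = r) (u : Fin n → ℝ)
    (hu : ∃ v : Fin n → ℝ, A *ᵥ v = 0 ∧ u ⬝ᵥ v ≠ 0)
    (hA' : (A + vecMulVec u u).IsHermitian) :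
    sInf {x : ℝ | (∃ i, hA'.eigenvalues i = x) ∧ x ≠ 0}
        * (∏ i ∈ Finset.univ.filter (fun i => hA.1.eigenvalues i ≠ 0), hA.1.eigenvalues i)
      ≤ ∏ i ∈ Finset.univ.filter (fun i => hA'.eigenvalues i ≠ 0), hA'.eigenvalues i :=
  pseudo_det_lower_bound_general A hA u hu hA'
end

section
/- Let A, B ∈ ℝ^{d×d} be positive semidefinite matrices with A ⪯ B. Then for every vector x in the image of A, x^T B^+ x ≤ x^T A^+ x, where X^+ denotes the Moore–Penrose pseudoinverse. -/
/-!
For `x = A y` the quadratic form of the pseudoinverse has the variational description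
`xᵀ A⁺ x = yᵀ A y = max_z (2 xᵀ z - zᵀ A z)`, the maximum being attained at `z = y`.
Since `A ⪯ B`, the kernel of `B` lies in that of `A`, so `x` is orthogonal to `ker B` and
`z = B⁺ x` solves `B z = x`. Then
`xᵀ B⁺ x = 2 xᵀ z - zᵀ B z ≤ 2 xᵀ z - zᵀ A z ≤ xᵀ A⁺ x`.
-/

open Matrix

namespace Matrix

lemma PosSemidef.isSymm {n : Type*} {A : Matrix n n ℝ} (hA : A.PosSemidef) : A.IsSymm :=
  isHermitian_iff_isSymm.mp hA.1

variable {n : Type*} [Fintype n]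

lemma IsSymm.dotProduct_mulVec_comm {A : Matrix n n ℝ} (hA : A.IsSymm) (v w : n → ℝ) :
    v ⬝ᵥ A *ᵥ w = A *ᵥ v ⬝ᵥ w := by
  rw [dotProduct_mulVec, ← mulVec_transpose, hA.eq]

lemma PosSemidef.dotProduct_mulVec_le_of_sub {A B : Matrix n n ℝ} (hAB : (B - A).PosSemidef)
    (v : n → ℝ) : v ⬝ᵥ A *ᵥ v ≤ v ⬝ᵥ B *ᵥ v := by
  have h := hAB.dotProduct_mulVec_nonneg v
  rw [star_trivial, sub_mulVec, dotProduct_sub] at h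
  linarith

lemma PosSemidef.mulVec_eq_zero_of_sub {A B : Matrix n n ℝ} (hA : A.PosSemidef)
    (hAB : (B - A).PosSemidef) {v : n → ℝ} (hv : B *ᵥ v = 0) : A *ᵥ v = 0 := by
  refine (hA.dotProduct_mulVec_zero_iff v).mp (le_antisymm ?_ (hA.dotProduct_mulVec_nonneg v))
  simpa [hv] using hAB.dotProduct_mulVec_le_of_sub v

lemma PosSemidef.two_mul_dotProduct_sub_le {A : Matrix n n ℝ} (hA : A.PosSemidef)
    (y z : n → ℝ) : 2 * (A *ᵥ y ⬝ᵥ z) - z ⬝ᵥ A *ᵥ z ≤ y ⬝ᵥ A *ᵥ y := by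
  have h := hA.dotProduct_mulVec_nonneg (y - z)
  rw [star_trivial, mulVec_sub, dotProduct_sub, sub_dotProduct, sub_dotProduct,
    hA.isSymm.dotProduct_mulVec_comm y z, dotProduct_comm z (A *ᵥ y)] at h
  linarith

end Matrix

lemma IsMoorePenrose.transpose_mul_mul {m n : Type*} [Fintype m] [Fintype n]
    {A : Matrix m n ℝ} {P : Matrix n m ℝ} (hP : IsMoorePenrose A P) : Aᵀ * A * P = Aᵀ := by
  rw [Matrix.mul_assoc, ← hP.2.2.1, ← transpose_mul, hP.1]

section Square

variable {n : Type*} [Fintype n]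

lemma IsMoorePenrose.dotProduct_mulVec_mulVec {A P : Matrix n n ℝ} (hA : A.IsSymm)
    (hP : IsMoorePenrose A P) (y : n → ℝ) : A *ᵥ y ⬝ᵥ P *ᵥ (A *ᵥ y) = y ⬝ᵥ A *ᵥ y := by
  rw [← hA.dotProduct_mulVec_comm, mulVec_mulVec, mulVec_mulVec, hP.1]

lemma IsMoorePenrose.mulVec_mulVec_eq_self {B Q : Matrix n n ℝ} (hB : B.IsSymm)
    (hQ : IsMoorePenrose B Q) {x : n → ℝ} (hx : ∀ v, B *ᵥ v = 0 → v ⬝ᵥ x = 0) :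
    B *ᵥ (Q *ᵥ x) = x := by
  set v := x - B *ᵥ (Q *ᵥ x)
  have hBBQ : B * B * Q = B := by simpa only [hB.eq] using hQ.transpose_mul_mul
  have hBv : B *ᵥ v = 0 := by
    rw [mulVec_sub, mulVec_mulVec, mulVec_mulVec, hBBQ, sub_self]
  have hvv : v ⬝ᵥ v = 0 := by
    calc v ⬝ᵥ v = v ⬝ᵥ x - v ⬝ᵥ B *ᵥ (Q *ᵥ x) := dotProduct_sub _ _ _
      _ = 0 := by rw [hx v hBv, hB.dotProduct_mulVec_comm, hBv, zero_dotProduct, sub_zero]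
  exact (sub_eq_zero.mp (dotProduct_self_eq_zero.mp hvv)).symm

end Square

theorem pinv_quadratic_antitone_general {d : ℕ} (A B : Matrix (Fin d) (Fin d) ℝ)
    (hA : A.PosSemidef) (hAB : (B - A).PosSemidef)
    (P Q : Matrix (Fin d) (Fin d) ℝ) (hP : IsMoorePenrose A P) (hQ : IsMoorePenrose B Q)
    (x : Fin d → ℝ) (hx : ∃ y : Fin d → ℝ, A *ᵥ y = x) :
    x ⬝ᵥ (Q *ᵥ x) ≤ x ⬝ᵥ (P *ᵥ x) := by
  obtain ⟨y, rfl⟩ := hx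
  have hB : B.PosSemidef := by simpa using hAB.add hA
  set z := Q *ᵥ (A *ᵥ y)
  have hBz : B *ᵥ z = A *ᵥ y := hQ.mulVec_mulVec_eq_self hB.isSymm fun v hv => by
    rw [hA.isSymm.dotProduct_mulVec_comm, hA.mulVec_eq_zero_of_sub hAB hv, zero_dotProduct]
  have hzBz : z ⬝ᵥ B *ᵥ z = A *ᵥ y ⬝ᵥ z := by rw [hBz, dotProduct_comm]
  calc A *ᵥ y ⬝ᵥ z = 2 * (A *ᵥ y ⬝ᵥ z) - z ⬝ᵥ B *ᵥ z := by linarith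
    _ ≤ 2 * (A *ᵥ y ⬝ᵥ z) - z ⬝ᵥ A *ᵥ z := by linarith [hAB.dotProduct_mulVec_le_of_sub z]
    _ ≤ y ⬝ᵥ A *ᵥ y := hA.two_mul_dotProduct_sub_le y z
    _ = A *ᵥ y ⬝ᵥ P *ᵥ (A *ᵥ y) := (hP.dotProduct_mulVec_mulVec hA.isSymm y).symm

/-- If `A ⪯ B` are PSD matrices, then for every `x ∈ Im A`,
`xᵀ B⁺ x ≤ xᵀ A⁺ x`. -/
theorem pinv_quadratic_antitone {d : ℕ} (A B : Matrix (Fin d) (Fin d) ℝ)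
    (hA : A.PosSemidef) (hB : B.PosSemidef) (hAB : (B - A).PosSemidef)
    (P Q : Matrix (Fin d) (Fin d) ℝ) (hP : IsMoorePenrose A P) (hQ : IsMoorePenrose B Q)
    (x : Fin d → ℝ) (hx : ∃ y : Fin d → ℝ, A *ᵥ y = x) :
    x ⬝ᵥ (Q *ᵥ x) ≤ x ⬝ᵥ (P *ᵥ x) :=
  pinv_quadratic_antitone_general A B hA hAB P Q hP hQ x hx
end
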